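/- Let n ≥ 2, let t_1, …, t_n, λ, c_0 ∈ ℂ, let c_1, …, c_n ∈ ℂ with ∑_{j=1}^{n} c_j = 0 and c_q ≠ 1, and fix distinct indices p, q ∈ {1,…,n}. Assume ϑ₁′(0) ≠ 0 and that ϑ₁(λ), ϑ₁(λ−t_p+t_q), ϑ₁(t_p−t_q), ϑ₁(t_q−t_p) are nonzero, and that for every j ∉ {p,q} the values ϑ₁(t_p−t_j), ϑ₁(t_j−t_q) and ϑ₁(t_q−t_j) are nonzero. Then (ϑ₁(t_p−t_q)/ϑ₁′(0)) · ( −(c_p/(c_q−1))·ρ(t_p−t_q) + (c_p/(c_q−1))·ρ(λ) + (1/(c_q−1))·(2πi·c_0 + ∑_{j≠p,q} c_j·ρ(t_p−t_j) − (c_p+1)·ρ(λ−t_p+t_q)) + ρ(t_p−t_q) − ∑_{j≠p,q} (c_j/(c_q−1))·ϑ₁′(0)·ϑ₁(λ−t_p+t_j)·ϑ₁(λ−t_j+t_q)·ϑ₁(t_p−t_q) / (ϑ₁(λ)·ϑ₁(λ−t_p+t_q)·ϑ₁(t_p−t_j)·ϑ₁(t_j−t_q)) ) = (ϑ₁(t_q−t_p)/ϑ₁′(0))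 · ( ρ(t_q−t_p) − ρ(λ−t_p+t_q) + (1/(1−c_q))·(2πi·c_0 + ∑_{j≠q} c_j·ρ(t_q−t_j) − c_q·ρ(λ)) ). -/

import Mathlib

open Complex Filter

/-- The theta function ϑ₁(u,τ). -/
noncomputable def theta (τ u : ℂ) : ℂ :=
  -∑' m : ℤ, Complex.exp ((Real.pi : ℂ) * Complex.I * (m + 1/2)^2 * τ +
    2 * (Real.pi : ℂ) * Complex.I * (m + 1/2) * (u + 1/2))

/-- Derivative ϑ₁′ in u. -/
noncomputable def theta' (τ : ℂ) : ℂ → ℂ := deriv (theta τ)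

/-- ρ(u) = ϑ₁′(u)/ϑ₁(u). -/
noncomputable def rho (τ u : ℂ) : ℂ := theta' τ u / theta τ u

/-- 𝔰(u;λ) = ϑ₁(u−λ)ϑ₁′(0)/(ϑ₁(u)ϑ₁(−λ)). -/
noncomputable def fraks (τ u lam : ℂ) : ℂ :=
  theta τ (u - lam) * theta' τ 0 / (theta τ u * theta τ (-lam))

noncomputable def Eterm (τ u : ℂ) (m : ℤ) : ℂ :=
  Complex.exp ((Real.pi : ℂ) * Complex.I * (m + 1/2)^2 * τ +
    2 * (Real.pi : ℂ) * Complex.I * (m + 1/2) * (u + 1/2))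

lemma theta_eq_tsum (τ u : ℂ) : theta τ u = -∑' m : ℤ, Eterm τ u m := rfl

lemma Eterm_eq (τ u : ℂ) (m : ℤ) :
    Eterm τ u m = Complex.exp ((Real.pi : ℂ) * Complex.I * τ / 4 +
      (Real.pi : ℂ) * Complex.I * (u + 1/2)) *
      jacobiTheta₂_term m (u + 1/2 + τ/2) τ := by
  rw [Eterm, jacobiTheta₂_term, ← Complex.exp_add]
  congr 1
  push_cast
  ring

lemma summable_norm_jacobiTheta₂_term {τ : ℂ} (hτ : 0 < τ.im) (z : ℂ) :
    Summable (fun n : ℤ => ‖jacobiTheta₂_term n z τ‖) := by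
  apply Summable.of_nonneg_of_le (fun n => norm_nonneg _)
    (fun n => norm_jacobiTheta₂_term_le hτ (le_refl |z.im|) (le_refl τ.im) n)
  simpa using summable_pow_mul_jacobiTheta₂_term_bound |z.im| hτ 0

lemma summable_norm_Eterm {τ : ℂ} (hτ : 0 < τ.im) (u : ℂ) :
    Summable (fun m : ℤ => ‖Eterm τ u m‖) := by
  simp only [Eterm_eq, norm_mul]
  exact (summable_norm_jacobiTheta₂_term hτ _).mul_left _

lemma theta_eq_jacobi (τ u : ℂ) :
    theta τ u = -(Complex.exp ((Real.pi : ℂ) * Complex.I * τ / 4 +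
      (Real.pi : ℂ) * Complex.I * (u + 1/2)) *
      jacobiTheta₂ (u + 1/2 + τ/2) τ) := by
  rw [theta_eq_tsum, jacobiTheta₂, ← tsum_mul_left]
  congr 1
  exact tsum_congr fun m => Eterm_eq τ u m

lemma cexp_eq_of_sub (X Y : ℂ) (k : ℤ) (h : X = Y + k*(2*(Real.pi:ℂ)*Complex.I)) :
    Complex.exp X = Complex.exp Y := by
  rw [h, Complex.exp_add, Complex.exp_int_mul_two_pi_mul_I, mul_one]

lemma cexp_eq_neg_of_sub (X Y : ℂ) (k : ℤ)
    (h : X = Y + (Real.pi:ℂ)*Complex.I + k*(2*(Real.pi:ℂ)*Complex.I)) :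
    Complex.exp X = -Complex.exp Y := by
  rw [h, Complex.exp_add, Complex.exp_add, Complex.exp_int_mul_two_pi_mul_I,
    Complex.exp_pi_mul_I]
  ring

lemma neg_cexp_eq (X Y : ℂ) (k : ℤ)
    (h : X = Y + (Real.pi:ℂ)*Complex.I + k*(2*(Real.pi:ℂ)*Complex.I)) :
    -Complex.exp X = Complex.exp Y := by
  rw [cexp_eq_neg_of_sub X Y k h, neg_neg]

lemma theta_neg (τ u : ℂ) : theta τ (-u) = -theta τ u := by
  rw [theta_eq_tsum, theta_eq_tsum, neg_neg]
  have h1 : ∑' m : ℤ, Eterm τ u m = ∑' m : ℤ, Eterm τ u (Equiv.subLeft (-1) m) :=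
    ((Equiv.subLeft (-1)).tsum_eq _).symm
  rw [h1, ← tsum_neg]
  apply tsum_congr
  intro m
  simp only [Equiv.subLeft_apply]
  show -Eterm τ (-u) m = Eterm τ u (-1 - m)
  rw [Eterm, Eterm]
  exact neg_cexp_eq _ _ m (by push_cast; ring)

lemma hasDerivAt_theta {τ : ℂ} (hτ : 0 < τ.im) (u : ℂ) :
    HasDerivAt (theta τ) (theta' τ u) u := by
  have h1 : HasDerivAt (fun u : ℂ => jacobiTheta₂ (u + 1/2 + τ/2) τ)
      (jacobiTheta₂' (u + 1/2 + τ/2) τ) u := by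
    have := (hasDerivAt_jacobiTheta₂_fst (u + 1/2 + τ/2) hτ).comp u
      (((hasDerivAt_id u).add_const (1/2 : ℂ)).add_const (τ/2 : ℂ))
    simpa [Function.comp_def] using this
  have h2 : HasDerivAt (fun u : ℂ => Complex.exp ((Real.pi : ℂ) * Complex.I * τ / 4 +
      (Real.pi : ℂ) * Complex.I * (u + 1/2)))
      ((Real.pi : ℂ) * Complex.I * Complex.exp ((Real.pi : ℂ) * Complex.I * τ / 4 +
      (Real.pi : ℂ) * Complex.I * (u + 1/2))) u := by
    have hin : HasDerivAt (fun u : ℂ => (Real.pi : ℂ) * Complex.I * τ / 4 +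
        (Real.pi : ℂ) * Complex.I * (u + 1/2)) ((Real.pi : ℂ) * Complex.I) u := by
      have := (((hasDerivAt_id u).add_const (1/2:ℂ)).const_mul ((Real.pi : ℂ) * Complex.I)).const_add
        ((Real.pi : ℂ) * Complex.I * τ / 4)
      simpa using this
    simpa [mul_comm] using hin.cexp
  have h3 : HasDerivAt (theta τ) (-((Real.pi : ℂ) * Complex.I * Complex.exp ((Real.pi : ℂ) * Complex.I * τ / 4 +
      (Real.pi : ℂ) * Complex.I * (u + 1/2)) * jacobiTheta₂ (u + 1/2 + τ/2) τ +
      Complex.exp ((Real.pi : ℂ) * Complex.I * τ / 4 +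
      (Real.pi : ℂ) * Complex.I * (u + 1/2)) * jacobiTheta₂' (u + 1/2 + τ/2) τ)) u := by
    have := (h2.mul h1).neg
    have heq : theta τ = fun u => -(Complex.exp ((Real.pi : ℂ) * Complex.I * τ / 4 +
      (Real.pi : ℂ) * Complex.I * (u + 1/2)) * jacobiTheta₂ (u + 1/2 + τ/2) τ) :=
      funext fun u => theta_eq_jacobi τ u
    rw [heq]
    exact this
  rw [show theta' τ u = _ from h3.deriv]
  exact h3

noncomputable def Phi0 (τ w : ℂ) : ℂ := ∑' j : ℤ, jacobiTheta₂_term (2*j) w (τ/2)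
noncomputable def Phi1 (τ w : ℂ) : ℂ := ∑' j : ℤ, jacobiTheta₂_term (2*j+1) w (τ/2)

lemma im_half {τ : ℂ} (hτ : 0 < τ.im) : 0 < (τ/2).im := by
  rw [show τ/2 = τ * (1/2 : ℝ) by push_cast; ring]
  rw [Complex.mul_im]
  simp
  positivity

lemma summable_norm_Phi0_term {τ : ℂ} (hτ : 0 < τ.im) (w : ℂ) :
    Summable (fun j : ℤ => ‖jacobiTheta₂_term (2*j) w (τ/2)‖) := by
  have hinj : Function.Injective (fun j : ℤ => 2*j) := fun a b h => by
    have h' : (2*a : ℤ) = 2*b := h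
    omega
  have := (summable_norm_jacobiTheta₂_term (im_half hτ) w).comp_injective hinj
  simpa [Function.comp_def] using this

lemma summable_norm_Phi1_term {τ : ℂ} (hτ : 0 < τ.im) (w : ℂ) :
    Summable (fun j : ℤ => ‖jacobiTheta₂_term (2*j+1) w (τ/2)‖) := by
  have hinj : Function.Injective (fun j : ℤ => 2*j+1) := fun a b h => by
    have h' : (2*a+1 : ℤ) = 2*b+1 := h
    omega
  have := (summable_norm_jacobiTheta₂_term (im_half hτ) w).comp_injective hinj
  simpa [Function.comp_def] using this

lemma theta_mul_theta {τ : ℂ} (hτ : 0 < τ.im) (u v : ℂ) :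
    theta τ (u+v) * theta τ (u-v) = Phi0 τ u * Phi1 τ v - Phi1 τ u * Phi0 τ v := by
  have hEn1 := summable_norm_Eterm hτ (u+v)
  have hEn2 := summable_norm_Eterm hτ (u-v)
  set g : ℤ×ℤ → ℂ := fun p => Eterm τ (u+v) p.1 * Eterm τ (u-v) p.2 with hgdef
  have hprod : theta τ (u+v) * theta τ (u-v) = ∑' p : ℤ×ℤ, g p := by
    rw [theta_eq_tsum, theta_eq_tsum, neg_mul_neg,
      tsum_mul_tsum_of_summable_norm hEn1 hEn2]
  have hgnorm : Summable (fun p : ℤ×ℤ => ‖g p‖) := by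
    have := hEn1.mul_of_nonneg hEn2 (fun m => norm_nonneg _) (fun m => norm_nonneg _)
    simpa [hgdef, norm_mul] using this
  set g1 : ℤ×ℤ → ℂ := fun p => if (p.1 + p.2) % 2 = 1 then g p else 0 with hg1def
  set g2 : ℤ×ℤ → ℂ := fun p => if (p.1 + p.2) % 2 = 1 then 0 else g p with hg2def
  have hg1 : Summable g1 := by
    apply Summable.of_norm_bounded hgnorm
    intro p
    simp only [hg1def]
    split_ifs
    · exact le_refl _
    · simp [norm_nonneg]
  have hg2 : Summable g2 := by
    apply Summable.of_norm_bounded hgnorm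
    intro p
    simp only [hg2def]
    split_ifs
    · simp [norm_nonneg]
    · exact le_refl _
  have hsplit : ∑' p, g p = ∑' p, g1 p + ∑' p, g2 p := by
    rw [← Summable.tsum_add hg1 hg2]
    exact tsum_congr fun p => by
      by_cases h : (p.1 + p.2) % 2 = 1 <;> simp [hg1def, hg2def, h]
  have hinjA : Function.Injective (fun j : ℤ×ℤ => ((j.1+j.2, j.1-j.2-1) : ℤ×ℤ)) := by
    intro a b h
    simp only [Prod.mk.injEq] at h
    exact Prod.ext (by omega) (by omega)
  have hsuppA : Function.support g1 ⊆ Set.range (fun j : ℤ×ℤ => ((j.1+j.2, j.1-j.2-1) : ℤ×ℤ)) := by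
    rintro ⟨p1, p2⟩ hp
    have hodd : (p1 + p2) % 2 = 1 := by
      by_contra h
      apply hp
      simp [hg1def, h]
    refine ⟨⟨(p1+p2+1)/2, p1 - (p1+p2+1)/2⟩, ?_⟩
    simp only [Prod.mk.injEq]
    constructor <;> omega
  have hinjB : Function.Injective (fun j : ℤ×ℤ => ((j.1+j.2, j.1-j.2) : ℤ×ℤ)) := by
    intro a b h
    simp only [Prod.mk.injEq] at h
    exact Prod.ext (by omega) (by omega)
  have hsuppB : Function.support g2 ⊆ Set.range (fun j : ℤ×ℤ => ((j.1+j.2, j.1-j.2) : ℤ×ℤ)) := by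
    rintro ⟨p1, p2⟩ hp
    have heven : (p1 + p2) % 2 ≠ 1 := by
      by_contra h
      apply hp
      simp [hg2def, h]
    refine ⟨⟨(p1+p2)/2, p1 - (p1+p2)/2⟩, ?_⟩
    simp only [Prod.mk.injEq]
    constructor <;> omega
  have keyA : ∀ j : ℤ×ℤ, g1 (j.1+j.2, j.1-j.2-1)
      = jacobiTheta₂_term (2*j.1) u (τ/2) * jacobiTheta₂_term (2*j.2+1) v (τ/2) := by
    intro j
    have hc : ((j.1+j.2) + (j.1-j.2-1)) % 2 = 1 := by omega
    simp only [hg1def, hgdef, hc, if_pos]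
    rw [Eterm, Eterm, jacobiTheta₂_term, jacobiTheta₂_term, ← Complex.exp_add, ← Complex.exp_add]
    exact cexp_eq_of_sub _ _ j.1 (by push_cast; ring)
  have keyB : ∀ j : ℤ×ℤ, g2 (j.1+j.2, j.1-j.2)
      = -(jacobiTheta₂_term (2*j.1+1) u (τ/2) * jacobiTheta₂_term (2*j.2) v (τ/2)) := by
    intro j
    have hc : ¬(((j.1+j.2) + (j.1-j.2)) % 2 = 1) := by omega
    simp only [hg2def, hgdef, hc, if_neg, if_false]
    rw [Eterm, Eterm, jacobiTheta₂_term, jacobiTheta₂_term, ← Complex.exp_add, ← Complex.exp_add]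
    exact cexp_eq_neg_of_sub _ _ j.1 (by push_cast; ring)
  have hA : ∑' p, g1 p = Phi0 τ u * Phi1 τ v := by
    calc ∑' p, g1 p = ∑' j : ℤ×ℤ, g1 (j.1+j.2, j.1-j.2-1) :=
          (Function.Injective.tsum_eq hinjA hsuppA).symm
    _ = ∑' j : ℤ×ℤ, jacobiTheta₂_term (2*j.1) u (τ/2) * jacobiTheta₂_term (2*j.2+1) v (τ/2) :=
          tsum_congr keyA
    _ = Phi0 τ u * Phi1 τ v :=
          (tsum_mul_tsum_of_summable_norm (summable_norm_Phi0_term hτ u)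
            (summable_norm_Phi1_term hτ v)).symm
  have hB : ∑' p, g2 p = -(Phi1 τ u * Phi0 τ v) := by
    calc ∑' p, g2 p = ∑' j : ℤ×ℤ, g2 (j.1+j.2, j.1-j.2) :=
          (Function.Injective.tsum_eq hinjB hsuppB).symm
    _ = ∑' j : ℤ×ℤ, -(jacobiTheta₂_term (2*j.1+1) u (τ/2) * jacobiTheta₂_term (2*j.2) v (τ/2)) :=
          tsum_congr keyB
    _ = -(Phi1 τ u * Phi0 τ v) := by
          rw [tsum_neg]
          exact congrArg Neg.neg (tsum_mul_tsum_of_summable_norm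
            (summable_norm_Phi1_term hτ u) (summable_norm_Phi0_term hτ v)).symm
  rw [hprod, hsplit, hA, hB]
  ring

lemma theta_zero (τ : ℂ) : theta τ 0 = 0 := by
  have := theta_neg τ 0
  rw [neg_zero] at this
  linear_combination this / 2

lemma theta'_neg {τ : ℂ} (hτ : 0 < τ.im) (u : ℂ) : theta' τ (-u) = theta' τ u := by
  have h1 : HasDerivAt (fun w : ℂ => -theta τ (-w)) (theta' τ (-u)) u := by
    have h0 : HasDerivAt (fun w : ℂ => theta τ (-w)) (theta' τ (-u) * (-1)) u :=
      (hasDerivAt_theta hτ (-u)).comp u (hasDerivAt_neg u)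
    have : HasDerivAt (fun w : ℂ => -theta τ (-w)) (-(theta' τ (-u) * (-1))) u := h0.neg
    simpa using this
  have h2 : (fun w : ℂ => -theta τ (-w)) = theta τ := funext fun w => by
    rw [theta_neg]; ring
  rw [h2] at h1
  exact h1.unique (hasDerivAt_theta hτ u)

lemma rho_neg {τ : ℂ} (hτ : 0 < τ.im) (u : ℂ) : rho τ (-u) = -rho τ u := by
  rw [rho, rho, theta_neg, theta'_neg hτ, div_neg]

/-- Weierstrass three-term identity. -/
lemma weier {τ : ℂ} (hτ : 0 < τ.im) (a b c d : ℂ) :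
    theta τ (a+b) * theta τ (a-b) * (theta τ (c+d) * theta τ (c-d))
    - theta τ (a+c) * theta τ (a-c) * (theta τ (b+d) * theta τ (b-d))
    + theta τ (a+d) * theta τ (a-d) * (theta τ (b+c) * theta τ (b-c)) = 0 := by
  rw [theta_mul_theta hτ, theta_mul_theta hτ, theta_mul_theta hτ, theta_mul_theta hτ,
    theta_mul_theta hτ, theta_mul_theta hτ]
  ring

/-- Degenerate (shifted) form of the three-term identity. -/
lemma star {τ : ℂ} (hτ : 0 < τ.im) (x y z : ℂ) (t : ℂ) :
    theta τ (x+t) * theta τ (y+t) * theta τ (z+t) * theta τ (x+y+z-t)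
    + theta τ (x+y+z+t) * theta τ (t-x) * theta τ (t-y) * theta τ (t-z)
    = theta τ (2*t) * (theta τ (x+y) * theta τ (y+z) * theta τ (x+z)) := by
  have W := weier hτ ((x+y)/2 + t) ((x-y)/2) ((x+y)/2 + z) (t - (x+y)/2)
  rw [show (x+y)/2 + t + (x-y)/2 = x + t by ring,
      show (x+y)/2 + t - (x-y)/2 = y + t by ring,
      show (x+y)/2 + z + (t - (x+y)/2) = z + t by ring,
      show (x+y)/2 + z - (t - (x+y)/2) = x+y+z-t by ring,
      show (x+y)/2 + t + ((x+y)/2 + z) = x+y+z+t by ring,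
      show (x+y)/2 + t - ((x+y)/2 + z) = t - z by ring,
      show (x-y)/2 + (t - (x+y)/2) = t - y by ring,
      show (x-y)/2 - (t - (x+y)/2) = -(t - x) by ring,
      show (x+y)/2 + t + (t - (x+y)/2) = 2*t by ring,
      show (x+y)/2 + t - (t - (x+y)/2) = x+y by ring,
      show (x-y)/2 + ((x+y)/2 + z) = x+z by ring,
      show (x-y)/2 - ((x+y)/2 + z) = -(y+z) by ring,
      theta_neg, theta_neg] at W
  linear_combination W

lemma Gprod {τ : ℂ} (hτ : 0 < τ.im) (x y z : ℂ) :
    theta' τ x * theta τ y * theta τ z * theta τ (x+y+z)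
    + theta τ x * theta' τ y * theta τ z * theta τ (x+y+z)
    + theta τ x * theta τ y * theta' τ z * theta τ (x+y+z)
    - theta τ x * theta τ y * theta τ z * theta' τ (x+y+z)
    = theta' τ 0 * (theta τ (x+y) * theta τ (y+z) * theta τ (x+z)) := by
  have hd := hasDerivAt_theta hτ
  have hx : HasDerivAt (fun t : ℂ => theta τ (x+t)) (theta' τ x) 0 := by
    have := (hd (x+0)).comp 0 ((hasDerivAt_id (0:ℂ)).const_add x)
    simpa [Function.comp_def] using this
  have hy : HasDerivAt (fun t : ℂ => theta τ (y+t)) (theta' τ y) 0 := by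
    have := (hd (y+0)).comp 0 ((hasDerivAt_id (0:ℂ)).const_add y)
    simpa [Function.comp_def] using this
  have hz : HasDerivAt (fun t : ℂ => theta τ (z+t)) (theta' τ z) 0 := by
    have := (hd (z+0)).comp 0 ((hasDerivAt_id (0:ℂ)).const_add z)
    simpa [Function.comp_def] using this
  have hsub : HasDerivAt (fun t : ℂ => theta τ (x+y+z-t)) (-theta' τ (x+y+z)) 0 := by
    have := (hd (x+y+z-0)).comp 0 ((hasDerivAt_id (0:ℂ)).const_sub (x+y+z))
    simpa [Function.comp_def] using this
  have hs : HasDerivAt (fun t : ℂ => theta τ (x+y+z+t)) (theta' τ (x+y+z)) 0 := by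
    have := (hd (x+y+z+0)).comp 0 ((hasDerivAt_id (0:ℂ)).const_add (x+y+z))
    simpa [Function.comp_def] using this
  have hmx : HasDerivAt (fun t : ℂ => theta τ (t-x)) (theta' τ (-x)) 0 := by
    have := (hd (0-x)).comp 0 ((hasDerivAt_id (0:ℂ)).sub_const x)
    simpa [Function.comp_def, zero_sub] using this
  have hmy : HasDerivAt (fun t : ℂ => theta τ (t-y)) (theta' τ (-y)) 0 := by
    have := (hd (0-y)).comp 0 ((hasDerivAt_id (0:ℂ)).sub_const y)
    simpa [Function.comp_def, zero_sub] using this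
  have hmz : HasDerivAt (fun t : ℂ => theta τ (t-z)) (theta' τ (-z)) 0 := by
    have := (hd (0-z)).comp 0 ((hasDerivAt_id (0:ℂ)).sub_const z)
    simpa [Function.comp_def, zero_sub] using this
  have h2t : HasDerivAt (fun t : ℂ => theta τ (2*t)) (theta' τ 0 * 2) 0 := by
    have := (hd (2*0)).comp 0 ((hasDerivAt_id (0:ℂ)).const_mul 2)
    simpa [Function.comp_def] using this
  have f1 := ((((hx.mul hy).mul hz).mul hsub).add (((hs.mul hmx).mul hmy).mul hmz))
  have f2 := h2t.mul_const (theta τ (x+y) * theta τ (y+z) * theta τ (x+z))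
  have f1' := f1.congr_of_eventuallyEq
    (Filter.Eventually.of_forall fun t => (star hτ x y z t).symm)
  have key := f2.unique f1'
  simp only [Pi.mul_apply, Pi.add_apply, add_zero, sub_zero, zero_sub, mul_one, one_mul, mul_zero, zero_add,
    theta_neg, theta'_neg hτ, theta_zero] at key
  linear_combination -key / 2

lemma rhoG {τ : ℂ} (hτ : 0 < τ.im) (x y z : ℂ) (hx : theta τ x ≠ 0) (hy : theta τ y ≠ 0)
    (hz : theta τ z ≠ 0) (hs : theta τ (x+y+z) ≠ 0) :
    rho τ x + rho τ y + rho τ z - rho τ (x+y+z)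
    = theta' τ 0 * theta τ (x+y) * theta τ (y+z) * theta τ (x+z) /
      (theta τ x * theta τ y * theta τ z * theta τ (x+y+z)) := by
  rw [rho, rho, rho, rho]
  field_simp
  linear_combination Gprod hτ x y z


lemma final_algebra (A T0 r L M K cp cq Sp Sq : ℂ) (hT0 : T0 ≠ 0) (hD : cq - 1 ≠ 0) :
    (A / T0) * (-(cp/(cq-1))*r + (cp/(cq-1))*L + (1/(cq-1))*(K + Sp - (cp+1)*M) + r
        - (Sp - Sq + -(cp + cq) * (M - L)) / (cq - 1))
    = (-A / T0) * (-r - M + (1/(1-cq))*(K + (cp * -r + Sq) - cq*L)) := by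
  have hD' : (1:ℂ) - cq ≠ 0 := fun h => hD (by linear_combination -h)
  rw [show (1:ℂ)/(1-cq) = -(1/(cq-1)) from by field_simp; ring]
  linear_combination (A * M / T0) * mul_inv_cancel₀ hD

theorem contiguity_qq_entry (τ : ℂ) (hτ : 0 < τ.im) (n : ℕ) (hn : 2 ≤ n)
    (t c : ℕ → ℂ) (lam c0 : ℂ)
    (hsum : ∑ j ∈ Finset.Icc 1 n, c j = 0)
    (p q : ℕ) (hp : p ∈ Finset.Icc 1 n) (hq : q ∈ Finset.Icc 1 n) (hpq : p ≠ q)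
    (hcq : c q ≠ 1) (hθ : theta' τ 0 ≠ 0)
    (h1 : theta τ lam ≠ 0) (h2 : theta τ (lam - t p + t q) ≠ 0)
    (h3 : theta τ (t p - t q) ≠ 0) (h4 : theta τ (t q - t p) ≠ 0)
    (h5 : ∀ j ∈ Finset.Icc 1 n, j ≠ p → j ≠ q →
      theta τ (t p - t j) ≠ 0 ∧ theta τ (t j - t q) ≠ 0 ∧ theta τ (t q - t j) ≠ 0) :
    (theta τ (t p - t q) / theta' τ 0) *
        (-(c p / (c q - 1)) * rho τ (t p - t q) + (c p / (c q - 1)) * rho τ lam +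
          (1 / (c q - 1)) * (2 * (Real.pi : ℂ) * Complex.I * c0 +
            (∑ j ∈ ((Finset.Icc 1 n).erase p).erase q, c j * rho τ (t p - t j)) -
            (c p + 1) * rho τ (lam - t p + t q)) +
          rho τ (t p - t q) -
          ∑ j ∈ ((Finset.Icc 1 n).erase p).erase q,
            (c j / (c q - 1)) *
              (theta' τ 0 * theta τ (lam - t p + t j) * theta τ (lam - t j + t q) *
                theta τ (t p - t q) /
                (theta τ lam * theta τ (lam - t p + t q) * theta τ (t p - t j) *
                  theta τ (t j - t q)))) =
      (theta τ (t q - t p) / theta' τ 0) *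
        (rho τ (t q - t p) - rho τ (lam - t p + t q) +
          (1 / (1 - c q)) * (2 * (Real.pi : ℂ) * Complex.I * c0 +
            (∑ j ∈ (Finset.Icc 1 n).erase q, c j * rho τ (t q - t j)) -
            c q * rho τ lam)) := by
  have hD : c q - 1 ≠ 0 := sub_ne_zero.mpr hcq
  have hD' : (1 : ℂ) - c q ≠ 0 := fun h => hD (by linear_combination -h)
  have hpq' : p ∈ (Finset.Icc 1 n).erase q := Finset.mem_erase.2 ⟨hpq, hp⟩
  have hqp' : q ∈ (Finset.Icc 1 n).erase p := Finset.mem_erase.2 ⟨Ne.symm hpq, hq⟩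
  have herase : ((Finset.Icc 1 n).erase q).erase p = ((Finset.Icc 1 n).erase p).erase q := by
    ext x; simp only [Finset.mem_erase]; tauto
  have e1 : ∑ j ∈ (Finset.Icc 1 n).erase q, c j * rho τ (t q - t j)
      = c p * rho τ (t q - t p)
        + ∑ j ∈ ((Finset.Icc 1 n).erase p).erase q, c j * rho τ (t q - t j) := by
    rw [← Finset.add_sum_erase _ _ hpq', herase]
  have hc2 : c p + (c q + ∑ j ∈ ((Finset.Icc 1 n).erase p).erase q, c j) = 0 := by
    rw [Finset.add_sum_erase _ c hqp', Finset.add_sum_erase _ c hp]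
    exact hsum
  have hSc : ∑ j ∈ ((Finset.Icc 1 n).erase p).erase q, c j = -(c p + c q) := by
    linear_combination hc2
  have hFj : ∀ j ∈ ((Finset.Icc 1 n).erase p).erase q,
      theta' τ 0 * theta τ (lam - t p + t j) * theta τ (lam - t j + t q) *
        theta τ (t p - t q) /
        (theta τ lam * theta τ (lam - t p + t q) * theta τ (t p - t j) *
          theta τ (t j - t q))
      = rho τ (t p - t j) - rho τ (t q - t j)
        + rho τ (lam - t p + t q) - rho τ lam := by
    intro j hj
    have hj' : j ≠ q ∧ j ≠ p ∧ j ∈ Finset.Icc 1 n := by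
      simp only [Finset.mem_erase] at hj; tauto
    obtain ⟨ha, hb, -⟩ := h5 j hj'.2.2 hj'.2.1 hj'.1
    have hsar : t p - t j + (t j - t q) + (lam - t p + t q) = lam := by ring
    have h := rhoG hτ (t p - t j) (t j - t q) (lam - t p + t q) ha hb h2
      (by rw [hsar]; exact h1)
    rw [hsar, show t p - t j + (t j - t q) = t p - t q by ring,
        show t j - t q + (lam - t p + t q) = lam - t p + t j by ring,
        show t p - t j + (lam - t p + t q) = lam - t j + t q by ring,
        show rho τ (t j - t q) = -rho τ (t q - t j) by
          rw [show t j - t q = -(t q - t j) by ring, rho_neg hτ]] at h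
    linear_combination -h
  have hstep : ∀ j ∈ ((Finset.Icc 1 n).erase p).erase q,
      (c j / (c q - 1)) *
        (theta' τ 0 * theta τ (lam - t p + t j) * theta τ (lam - t j + t q) *
          theta τ (t p - t q) /
          (theta τ lam * theta τ (lam - t p + t q) * theta τ (t p - t j) *
            theta τ (t j - t q)))
      = (c j * rho τ (t p - t j)) / (c q - 1) - (c j * rho τ (t q - t j)) / (c q - 1)
        + (c j * (rho τ (lam - t p + t q) - rho τ lam)) / (c q - 1) := by
    intro j hj
    rw [hFj j hj]
    ring
  have hSF' : ∑ j ∈ ((Finset.Icc 1 n).erase p).erase q,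
      (c j / (c q - 1)) *
        (theta' τ 0 * theta τ (lam - t p + t j) * theta τ (lam - t j + t q) *
          theta τ (t p - t q) /
          (theta τ lam * theta τ (lam - t p + t q) * theta τ (t p - t j) *
            theta τ (t j - t q)))
      = ((∑ j ∈ ((Finset.Icc 1 n).erase p).erase q, c j * rho τ (t p - t j))
          - (∑ j ∈ ((Finset.Icc 1 n).erase p).erase q, c j * rho τ (t q - t j))
          + -(c p + c q) * (rho τ (lam - t p + t q) - rho τ lam)) / (c q - 1) := by
    rw [Finset.sum_congr rfl hstep, Finset.sum_add_distrib, Finset.sum_sub_distrib,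
      ← Finset.sum_div, ← Finset.sum_div, ← Finset.sum_div, ← Finset.sum_mul,
      div_sub_div_same, ← add_div, hSc]
  rw [hSF', e1,
    show theta τ (t q - t p) = -theta τ (t p - t q) by
      rw [show t q - t p = -(t p - t q) by ring, theta_neg],
    show rho τ (t q - t p) = -rho τ (t p - t q) by
      rw [show t q - t p = -(t p - t q) by ring, rho_neg hτ]]
  exact final_algebra _ _ _ _ _ _ _ _ _ _ hθ hD
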